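/- arXiv:1209.1842 — 3 statements merged into one kernel-verified Lean document; each statement's English description precedes it below -/
import Mathlib

section
/- For every graph G with a minimum {k}-dominating multiset {u_1,…,u_γ}, there exists a k-partition P_1,…,P_γ of V(G) such that u_i ∈ P_i and P_i ⊆ N[u_i] for each i. -/
open scoped Classical

noncomputable def domCount {V : Type*} (G : SimpleGraph V) (A : Multiset V) (v : V) : ℕ :=
  Multiset.countP (fun a => a = v ∨ G.Adj v a) A

/-- `A` dominates `B`: for every vertex `b`, the number of elements of `A` in the closed
neighborhood of `b` (with multiplicity) is at least the multiplicity of `b` in `B`. -/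
def Dominates {V : Type*} (G : SimpleGraph V) (A B : Multiset V) : Prop :=
  ∀ b, B.count b ≤ domCount G A b

/-- `A` is a `{k}`-dominating multiset of `G`. -/
def KDominating {V : Type*} (G : SimpleGraph V) (k : ℕ) (A : Multiset V) : Prop :=
  ∀ v, k ≤ domCount G A v

/-- the `{k}`-domination number `γ_{k}(G)`. -/
noncomputable def gammaK {V : Type*} (G : SimpleGraph V) (k : ℕ) : ℕ :=
  sInf {n | ∃ D : Multiset V, KDominating G k D ∧ Multiset.card D = n}

/-- `S` is a dominating set of `G`. -/
def IsDomSet {V : Type*} (G : SimpleGraph V) (S : Finset V) : Prop :=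
  ∀ v, ∃ d ∈ S, d = v ∨ G.Adj v d

/-- the domination number `γ(G)`. -/
noncomputable def gamma {V : Type*} (G : SimpleGraph V) : ℕ :=
  sInf {n | ∃ S : Finset V, IsDomSet G S ∧ S.card = n}

/-- the Ψ-projection of a multiset on `V(G) × V(H)` onto `V(H)`: multiplicity at `h` is the
sum over `g` of the multiplicity of `(g,h)`. -/
def psiH {α β : Type*} (A : Multiset (α × β)) : Multiset β := A.map Prod.snd

theorem stmt4 {V : Type*} [Fintype V] (G : SimpleGraph V) (k : ℕ) (hk : 1 ≤ k)
    (D : Multiset V) (hD : KDominating G k D) (hmin : Multiset.card D = gammaK G k) :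
    ∃ (u : Fin (Multiset.card D) → V) (P : Fin (Multiset.card D) → Finset V),
      (↑(List.ofFn u) : Multiset V) = D ∧
      (∀ v : V, (Finset.univ.filter fun i => v ∈ P i).card = k) ∧
      (∀ i, u i ∈ P i) ∧
      (∀ i, ∀ v ∈ P i, v = u i ∨ G.Adj (u i) v) := by
  classical
  -- no vertex appears more than k times in D
  have hle : ∀ v, Multiset.count v D ≤ k := by
    intro v
    by_contra h
    push_neg at h
    have hv : v ∈ D := Multiset.count_pos.mp (by omega)
    have hkd : KDominating G k (D.erase v) := by
      intro w
      have hce : v ::ₘ D.erase v = D := Multiset.cons_erase hv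
      have hcp : domCount G D w
          = domCount G (D.erase v) w + (if (v = w ∨ G.Adj w v) then 1 else 0) := by
        conv_lhs => rw [← hce]
        exact Multiset.countP_cons _ v _
      by_cases hp : (v = w ∨ G.Adj w v)
      · have hrep : Multiset.replicate (k+1) v ≤ D :=
          Multiset.le_count_iff_replicate_le.mp (by omega)
        have h1 : k + 1 ≤ domCount G D w := by
          calc k + 1 = Multiset.countP (fun a => a = w ∨ G.Adj w a)
                (Multiset.replicate (k+1) v) := by
                  rw [Multiset.countP_eq_card.mpr
                    (fun a ha => by rw [Multiset.eq_of_mem_replicate ha]; exact hp),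
                    Multiset.card_replicate]
            _ ≤ domCount G D w := Multiset.countP_le_of_le _ hrep
        rw [hcp, if_pos hp] at h1
        omega
      · have h1 := hD w
        rw [hcp, if_neg hp] at h1
        omega
    have h2 : gammaK G k ≤ Multiset.card (D.erase v) :=
      Nat.sInf_le ⟨D.erase v, hkd, rfl⟩
    rw [Multiset.card_erase_of_mem hv, Nat.pred_eq_sub_one] at h2
    have h3 : 0 < Multiset.card D := Multiset.card_pos.mpr fun h0 => by simp [h0] at hv
    omega
  -- enumerate D
  set L := D.toList with hLdef
  have hlen : L.length = Multiset.card D := Multiset.length_toList D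
  set u : Fin (Multiset.card D) → V := fun i => L.get (Fin.cast hlen.symm i) with hu
  have hofn : List.ofFn u = L := by
    apply List.ext_get
    · simp [hlen]
    · intro n h1 h2
      simp [hu, List.get_ofFn]
  have hDL : (↑(List.ofFn u) : Multiset V) = D := by
    rw [hofn, hLdef, Multiset.coe_toList]
  have hmap : D = Multiset.map u (Finset.univ : Finset (Fin (Multiset.card D))).val := by
    conv_lhs => rw [← hDL]
    simp [List.ofFn_eq_map, Fin.univ_def]
  -- express counts via filters over indices
  have hcount : ∀ v, Multiset.count v D = (Finset.univ.filter fun i => u i = v).card := by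
    intro v
    conv_lhs => rw [hmap]
    rw [Multiset.count_map, Finset.card, Finset.filter_val]
    simp [eq_comm]
  have hdom : ∀ v, domCount G D v
      = (Finset.univ.filter fun i => u i = v ∨ G.Adj v (u i)).card := by
    intro v
    unfold domCount
    conv_lhs => rw [hmap]
    rw [Multiset.countP_map, Finset.card, Finset.filter_val]

  -- choose exactly k indices per vertex
  have hsub : ∀ v : V, (Finset.univ.filter fun i => u i = v)
      ⊆ (Finset.univ.filter fun i => u i = v ∨ G.Adj v (u i)) := by
    intro v i hi
    simp only [Finset.mem_filter] at *
    exact ⟨hi.1, Or.inl hi.2⟩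
  have hchoose : ∀ v : V, ∃ S : Finset (Fin (Multiset.card D)),
      (Finset.univ.filter fun i => u i = v) ⊆ S ∧
      S ⊆ (Finset.univ.filter fun i => u i = v ∨ G.Adj v (u i)) ∧ S.card = k := by
    intro v
    exact Finset.exists_subsuperset_card_eq (hsub v)
      (by rw [← hcount v]; exact hle v)
      (by rw [← hdom v]; exact hD v)
  choose S hS1 hS2 hS3 using hchoose
  refine ⟨u, fun i => Finset.univ.filter fun v => i ∈ S v, hDL, ?_, ?_, ?_⟩
  · intro v
    have : (Finset.univ.filter fun i => v ∈ Finset.univ.filter fun w => i ∈ S w) = S v := by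
      ext i; simp
    rw [this, hS3]
  · intro i
    simp only [Finset.mem_filter, Finset.mem_univ, true_and]
    exact hS1 (u i) (by simp)
  · intro i v hv
    simp only [Finset.mem_filter, Finset.mem_univ, true_and] at hv
    have := hS2 v hv
    simp only [Finset.mem_filter, Finset.mem_univ, true_and] at this
    rcases this with h | h
    · exact Or.inl h.symm
    · exact Or.inr h.symm
end

section
/- Let {u_1,…,u_γ} be a minimum {k}-dominating multiset of G and P_1,…,P_γ a k-partition of V(G) with u_i ∈ P_i and P_i ⊆ N[u_i] for all i. Then for every subset I of {1,…,γ}, the multiset A = ⊎_{i∈I}{u_i} dominates C = ⊎_{i∈I}P_i, and moreover any multiset B of vertices dominating C satisfies |B| ≥ |A| = |I|. -/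
open scoped Classical

/-!
Each `P i` lies in `N[u i]`, so `u i` alone dominates `P i`, and summing over `I` shows that
`⊎_{i ∈ I} {u i}` dominates `⊎_{i ∈ I} P i`. Conversely, if `B` dominates `⊎_{i ∈ I} P i`, then
`B ⊎ ⊎_{i ∉ I} {u i}` is `{k}`-dominating: a vertex `v` lies in `k` of the parts, those with
index in `I` are covered by `B` and the others by their centres `u i`. Minimality of
`γ = γ_{k}(G)` then gives `|B| + (γ - |I|) ≥ γ`.
-/

section

variable {V ι : Type*}

theorem count_bind_finset_val (P : ι → Finset V) (s : Multiset ι) (v : V) :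
    (s.bind fun i => (P i).val).count v = s.countP fun i => v ∈ P i := by
  induction s using Multiset.induction with
  | empty => simp
  | cons a s ih =>
    rw [Multiset.cons_bind, Multiset.count_add, Multiset.countP_cons, ih]
    by_cases h : v ∈ P a
    · simp [h, Multiset.count_eq_one_of_mem (P a).nodup h, Nat.add_comm]
    · simp [h]

variable (G : SimpleGraph V)

theorem domCount_add (A B : Multiset V) (v : V) :
    domCount G (A + B) v = domCount G A v + domCount G B v :=
  Multiset.countP_add _ A B

theorem gammaK_le_card {k : ℕ} {D : Multiset V} (hD : KDominating G k D) :
    gammaK G k ≤ Multiset.card D :=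
  Nat.sInf_le ⟨D, hD, rfl⟩

variable {u : ι → V} {P : ι → Finset V}

theorem countP_mem_le_domCount_map (hPN : ∀ i, ∀ v ∈ P i, v = u i ∨ G.Adj (u i) v)
    (s : Multiset ι) (v : V) :
    s.countP (fun i => v ∈ P i) ≤ domCount G (s.map u) v := by
  rw [domCount, Multiset.countP_map, Multiset.countP_eq_card_filter]
  refine Multiset.card_le_card (Multiset.monotone_filter_right s fun i hi => ?_)
  rcases hPN i v hi with h | h
  · exact Or.inl h.symm
  · exact Or.inr h.symm

theorem dominates_map_bind (hPN : ∀ i, ∀ v ∈ P i, v = u i ∨ G.Adj (u i) v) (s : Multiset ι) :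
    Dominates G (s.map u) (s.bind fun i => (P i).val) := fun v => by
  rw [count_bind_finset_val]
  exact countP_mem_le_domCount_map G hPN s v

theorem kDominating_add_map_compl [Fintype ι] [DecidableEq ι] {k : ℕ}
    (hcover : ∀ v, k ≤ (Finset.univ.filter fun i => v ∈ P i).card)
    (hPN : ∀ i, ∀ v ∈ P i, v = u i ∨ G.Adj (u i) v) {I : Finset ι} {B : Multiset V}
    (hB : Dominates G B (I.val.bind fun i => (P i).val)) :
    KDominating G k (B + Iᶜ.val.map u) := fun v => by
  have hsplit : (Finset.univ.filter fun i => v ∈ P i).card ≤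
      (I.filter fun i => v ∈ P i).card + (Iᶜ.filter fun i => v ∈ P i).card := by
    rw [← Finset.union_compl I, Finset.filter_union]
    exact Finset.card_union_le _ _
  have hI : (I.filter fun i => v ∈ P i).card ≤ domCount G B v := by
    have h := hB v
    rwa [count_bind_finset_val, Multiset.countP_eq_card_filter] at h
  have hIc : (Iᶜ.filter fun i => v ∈ P i).card ≤ domCount G (Iᶜ.val.map u) v := by
    have h := countP_mem_le_domCount_map G hPN Iᶜ.val v
    rwa [Multiset.countP_eq_card_filter] at h
  rw [domCount_add]
  exact (hcover v).trans (hsplit.trans (add_le_add hI hIc))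

end

theorem stmt5_general {V : Type*} (G : SimpleGraph V) (k : ℕ)
    (u : Fin (gammaK G k) → V)
    (P : Fin (gammaK G k) → Finset V)
    (hpart : ∀ v : V, (Finset.univ.filter fun i => v ∈ P i).card = k)
    (hPN : ∀ i, ∀ v ∈ P i, v = u i ∨ G.Adj (u i) v)
    (I : Finset (Fin (gammaK G k))) :
    Dominates G (I.val.map u) (I.val.bind fun i => (P i).val) ∧
      (∀ B : Multiset V, Dominates G B (I.val.bind fun i => (P i).val) →
        Multiset.card (I.val.map u) ≤ Multiset.card B) ∧
      Multiset.card (I.val.map u) = I.card := by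
  have hcard : Multiset.card (I.val.map u) = I.card := Multiset.card_map u I.val
  refine ⟨dominates_map_bind G hPN I.val, fun B hB => ?_, hcard⟩
  have hγ := gammaK_le_card G
    (kDominating_add_map_compl G (fun v => (hpart v).ge) hPN hB)
  rw [Multiset.card_add, Multiset.card_map, Finset.card_val, Finset.card_compl,
    Fintype.card_fin] at hγ
  have hI : I.card ≤ gammaK G k := by simpa using Finset.card_le_univ I
  omega

theorem stmt5 {V : Type*} [Fintype V] (G : SimpleGraph V) (k : ℕ) (hk : 1 ≤ k)
    (u : Fin (gammaK G k) → V)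
    (hu : KDominating G k (↑(List.ofFn u) : Multiset V))
    (P : Fin (gammaK G k) → Finset V)
    (hpart : ∀ v : V, (Finset.univ.filter fun i => v ∈ P i).card = k)
    (huP : ∀ i, u i ∈ P i)
    (hPN : ∀ i, ∀ v ∈ P i, v = u i ∨ G.Adj (u i) v)
    (I : Finset (Fin (gammaK G k))) :
    Dominates G (I.val.map u) (I.val.bind fun i => (P i).val) ∧
      (∀ B : Multiset V, Dominates G B (I.val.bind fun i => (P i).val) →
        Multiset.card (I.val.map u) ≤ Multiset.card B) ∧
      Multiset.card (I.val.map u) = I.card :=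
  stmt5_general G k u P hpart hPN I
end

section
/- For all finite graphs G and H, γ(G) · γ(H) ≤ 2 · γ(G □ H), where γ denotes the ordinary domination number. -/
open scoped Classical

lemma gamma_exists {V : Type*} [Fintype V] (G : SimpleGraph V) :
    ∃ S : Finset V, IsDomSet G S ∧ S.card = gamma G := by
  classical
  have h : gamma G ∈ {n | ∃ S : Finset V, IsDomSet G S ∧ S.card = n} :=
    Nat.sInf_mem ⟨Finset.univ.card, Finset.univ,
      fun v => ⟨v, Finset.mem_univ v, Or.inl rfl⟩, rfl⟩
  exact h

lemma gamma_le {V : Type*} (G : SimpleGraph V) (S : Finset V) (hS : IsDomSet G S) :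
    gamma G ≤ S.card :=
  Nat.sInf_le ⟨S, hS, rfl⟩

theorem stmt7 {α β : Type*} [Fintype α] [Fintype β]
    (G : SimpleGraph α) (H : SimpleGraph β) :
    gamma G * gamma H ≤ 2 * gamma (G.boxProd H) := by
  classical
  obtain ⟨D, hD, hDcard⟩ := gamma_exists (G.boxProd H)
  obtain ⟨S, hS, hScard⟩ := gamma_exists G
  choose p hpS hp using hS
  set horiz : α → β → Prop :=
    fun u h => ∀ g, p g = u → ∃ g', (g', h) ∈ D ∧ (g' = g ∨ G.Adj g g') with horiz_def
  -- Claim 1 : row counting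
  have claim1 : ∀ h : β, gamma G ≤ (D.filter (fun x => x.2 = h)).card
      + (S.filter (fun u => ¬ horiz u h)).card := by
    intro h
    set A : Finset α := (D.filter (fun x => x.2 = h)).image Prod.fst
      ∪ S.filter (fun u => ¬ horiz u h) with hA
    have hdom : IsDomSet G A := by
      intro g
      by_cases hh : horiz (p g) h
      · obtain ⟨g', hg'D, hg'⟩ := hh g rfl
        refine ⟨g', Finset.mem_union_left _ ?_, hg'⟩
        exact Finset.mem_image.2 ⟨(g', h), Finset.mem_filter.2 ⟨hg'D, rfl⟩, rfl⟩
      · exact ⟨p g, Finset.mem_union_right _ (Finset.mem_filter.2 ⟨hpS g, hh⟩), hp g⟩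
    calc gamma G ≤ A.card := gamma_le G A hdom
      _ ≤ ((D.filter (fun x => x.2 = h)).image Prod.fst).card
          + (S.filter (fun u => ¬ horiz u h)).card := Finset.card_union_le _ _
      _ ≤ _ := Nat.add_le_add_right Finset.card_image_le _
  -- Claim 2 : column counting
  have claim2 : ∀ u ∈ S, gamma H ≤ (D.filter (fun x => p x.1 = u)).card
      + (Finset.univ.filter (fun h => horiz u h)).card := by
    intro u _
    set B : Finset β := (D.filter (fun x => p x.1 = u)).image Prod.snd
      ∪ Finset.univ.filter (fun h => horiz u h) with hB
    have hdom : IsDomSet H B := by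
      intro h
      by_cases hh : horiz u h
      · exact ⟨h, Finset.mem_union_right _
          (Finset.mem_filter.2 ⟨Finset.mem_univ _, hh⟩), Or.inl rfl⟩
      · simp only [horiz_def] at hh
        push_neg at hh
        obtain ⟨g, hpg, hno⟩ := hh
        obtain ⟨d, hdD, hd⟩ := hD (g, h)
        rcases hd with rfl | hadj
        · exact absurd rfl (hno g hdD).1
        · rw [SimpleGraph.boxProd_adj] at hadj
          rcases hadj with ⟨hGa, hsnd⟩ | ⟨hHa, hfst⟩
          · exact absurd hGa (hno d.1 (by rw [show h = d.2 from hsnd]; simpa using hdD)).2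
          · refine ⟨d.2, Finset.mem_union_left _ ?_, Or.inr hHa⟩
            exact Finset.mem_image.2 ⟨d, Finset.mem_filter.2 ⟨hdD, by rw [← hfst, hpg]⟩, rfl⟩
    calc gamma H ≤ B.card := gamma_le H B hdom
      _ ≤ ((D.filter (fun x => p x.1 = u)).image Prod.snd).card
          + (Finset.univ.filter (fun h => horiz u h)).card := Finset.card_union_le _ _
      _ ≤ _ := Nat.add_le_add_right Finset.card_image_le _
  -- notation
  set m := D.card with hm
  set k := S.card with hk
  set T := ∑ u ∈ S, (Finset.univ.filter (fun h => horiz u h)).card with hT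
  -- sum of row fibers = m
  have hrow : ∑ h : β, (D.filter (fun x => x.2 = h)).card = m :=
    (Finset.card_eq_sum_card_fiberwise (f := Prod.snd) (fun x _ => Finset.mem_univ _)).symm
  -- sum of column fibers = m
  have hcol : ∑ u ∈ S, (D.filter (fun x => p x.1 = u)).card = m :=
    (Finset.card_eq_sum_card_fiberwise (f := fun x : α × β => p x.1) (fun x _ => hpS x.1)).symm
  -- bad/good complement
  have hcompl : T + ∑ u ∈ S, (Finset.univ.filter (fun h => ¬ horiz u h)).card
      = k * Fintype.card β := by
    rw [hT, ← Finset.sum_add_distrib]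
    have : ∀ u ∈ S, (Finset.univ.filter (fun h => horiz u h)).card
        + (Finset.univ.filter (fun h => ¬ horiz u h)).card = Fintype.card β := by
      intro u _
      rw [Finset.card_filter_add_card_filter_not]
      rfl
    rw [Finset.sum_congr rfl this, Finset.sum_const, smul_eq_mul]
  -- swap double count of bad pairs
  have hswap : ∑ h : β, (S.filter (fun u => ¬ horiz u h)).card
      = ∑ u ∈ S, (Finset.univ.filter (fun h => ¬ horiz u h)).card := by
    simp_rw [Finset.card_filter]
    exact Finset.sum_comm
  -- summed claim 1
  have sum1 : k * Fintype.card β ≤ m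
      + ∑ u ∈ S, (Finset.univ.filter (fun h => ¬ horiz u h)).card := by
    calc k * Fintype.card β = ∑ _h : β, k := by
          rw [Finset.sum_const, smul_eq_mul, mul_comm]; rfl
      _ ≤ ∑ h : β, ((D.filter (fun x => x.2 = h)).card
          + (S.filter (fun u => ¬ horiz u h)).card) := by
          apply Finset.sum_le_sum
          intro h _
          exact le_of_eq_of_le hScard (claim1 h)
      _ = m + ∑ h : β, (S.filter (fun u => ¬ horiz u h)).card := by
          rw [Finset.sum_add_distrib, hrow]
      _ = _ := by rw [hswap]
  -- hence T ≤ m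
  have hTm : T ≤ m := by
    set Bad := ∑ u ∈ S, (Finset.univ.filter (fun h => ¬ horiz u h)).card with hBad
    set kb := k * Fintype.card β with hkb
    omega
  -- summed claim 2
  have sum2 : k * gamma H ≤ m + T := by
    calc k * gamma H = ∑ _u ∈ S, gamma H := by rw [Finset.sum_const, smul_eq_mul]
      _ ≤ ∑ u ∈ S, ((D.filter (fun x => p x.1 = u)).card
          + (Finset.univ.filter (fun h => horiz u h)).card) :=
          Finset.sum_le_sum claim2
      _ = m + T := by rw [Finset.sum_add_distrib, hcol]
  rw [← hScard, ← hDcard]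
  exact le_trans sum2 (by omega)
end
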